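/- arXiv:1003.0985 — 2 statements merged into one kernel-verified Lean document; each statement's English description precedes it below -/
import Mathlib

section
/- Let E be a simplicial commutative k-algebra whose Moore complex satisfies NE_4 = 0. Then for all x_1 ∈ NE_1 and y_3 ∈ NE_3 the following identity holds in E_3: (s_2 s_1 s_0 (d_1 x_1) − s_1 s_0 x_1) · y_3 = 0. -/
/-!
Put `a := s₂s₁s₀d₁x - s₁s₀x`, so that `d₃ a = 0`. Whenever `a ∈ Eₙ` has `dₙ a = 0` and `y ∈ NEₙ`,
the element `w := (sₙ a - sₙ₋₁ a) · sₙ y` of `Eₙ₊₁` lies in `NEₙ₊₁`: for `i < n` the face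
`dᵢ sₙ y = sₙ₋₁ dᵢ y` vanishes, and `dₙ (sₙ a - sₙ₋₁ a) = a - a`. Its last face is
`dₙ₊₁ w = (a - sₙ₋₁ dₙ a) · y = a · y`, so `NEₙ₊₁ = 0` forces `a · y = 0`.
-/

/-- A simplicial commutative `k`-algebra: a family of commutative `k`-algebras
`obj n` together with face algebra homomorphisms `d n i : obj (n+1) →ₐ[k] obj n`
(representing `d_i : E_{n+1} → E_n`, `0 ≤ i ≤ n+1`) and degeneracy algebra
homomorphisms `s n i : obj n →ₐ[k] obj (n+1)` (representing
`s_i : E_n → E_{n+1}`, `0 ≤ i ≤ n`), satisfying the simplicial identities. -/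
structure SimplicialCommAlg (k : Type*) [CommRing k]
    (obj : ℕ → Type*) [∀ n, CommRing (obj n)] [∀ n, Algebra k (obj n)] where
  d : (n : ℕ) → ℕ → (obj (n + 1) →ₐ[k] obj n)
  s : (n : ℕ) → ℕ → (obj n →ₐ[k] obj (n + 1))
  dd : ∀ (n i j : ℕ), i < j → j ≤ n + 2 →
    (d n i).comp (d (n + 1) j) = (d n (j - 1)).comp (d (n + 1) i)
  ds_lt : ∀ (m i j : ℕ), i < j → j ≤ m + 1 →
    (d (m + 1) i).comp (s (m + 1) j) = (s m (j - 1)).comp (d m i)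
  ds_self : ∀ (n j : ℕ), j ≤ n → (d n j).comp (s n j) = AlgHom.id k (obj n)
  ds_succ : ∀ (n j : ℕ), j ≤ n → (d n (j + 1)).comp (s n j) = AlgHom.id k (obj n)
  ds_gt : ∀ (m i j : ℕ), j + 1 < i → i ≤ m + 2 →
    (d (m + 1) i).comp (s (m + 1) j) = (s m j).comp (d m (i - 1))
  ss : ∀ (n i j : ℕ), i ≤ j → j ≤ n →
    (s (n + 1) i).comp (s n j) = (s (n + 1) (j + 1)).comp (s n i)

namespace SimplicialCommAlg

variable {k : Type*} [CommRing k] {obj : ℕ → Type*} [∀ n, CommRing (obj n)]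
  [∀ n, Algebra k (obj n)] (E : SimplicialCommAlg k obj)

theorem d_self_s_apply {n j : ℕ} (hj : j ≤ n) (x : obj n) : E.d n j (E.s n j x) = x :=
  DFunLike.congr_fun (E.ds_self n j hj) x

theorem d_succ_s_apply {n j : ℕ} (hj : j ≤ n) (x : obj n) : E.d n (j + 1) (E.s n j x) = x :=
  DFunLike.congr_fun (E.ds_succ n j hj) x

theorem d_s_last_apply {m i : ℕ} (hi : i ≤ m) (x : obj (m + 1)) :
    E.d (m + 1) i (E.s (m + 1) (m + 1) x) = E.s m m (E.d m i x) :=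
  DFunLike.congr_fun (E.ds_lt m i (m + 1) (Nat.lt_succ_of_le hi) le_rfl) x

theorem d_last_s_apply {m j : ℕ} (hj : j ≤ m) (x : obj (m + 1)) :
    E.d (m + 1) (m + 2) (E.s (m + 1) j x) = E.s m j (E.d m (m + 1) x) :=
  DFunLike.congr_fun (E.ds_gt m (m + 2) j (by omega) le_rfl) x

theorem mul_eq_zero_of_moore_eq_zero {m : ℕ}
    (hN : ∀ w : obj (m + 2), (∀ i ≤ m + 1, E.d (m + 1) i w = 0) → w = 0)
    {a y : obj (m + 1)} (ha : E.d m (m + 1) a = 0) (hy : ∀ i ≤ m, E.d m i y = 0) :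
    a * y = 0 := by
  set b := E.s (m + 1) (m + 1) a - E.s (m + 1) m a
  have hb : E.d (m + 1) (m + 1) b = 0 := by
    simp only [b, map_sub, E.d_self_s_apply le_rfl, E.d_succ_s_apply m.le_succ, sub_self]
  have hw : b * E.s (m + 1) (m + 1) y = 0 := by
    refine hN _ fun i hi => ?_
    rcases Nat.lt_or_eq_of_le hi with hi | rfl
    · rw [map_mul, E.d_s_last_apply (Nat.le_of_lt_succ hi), hy i (Nat.le_of_lt_succ hi),
        map_zero, mul_zero]
    · rw [map_mul, hb, zero_mul]
  calc a * y = E.d (m + 1) (m + 2) (b * E.s (m + 1) (m + 1) y) := by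
        rw [map_mul, map_sub, E.d_succ_s_apply le_rfl, E.d_succ_s_apply le_rfl,
          E.d_last_s_apply le_rfl, ha, map_zero, sub_zero]
    _ = 0 := by rw [hw, map_zero]

end SimplicialCommAlg

theorem stmt_5_general {k : Type*} [CommRing k] {obj : ℕ → Type*}
    [∀ n, CommRing (obj n)] [∀ n, Algebra k (obj n)]
    (E : SimplicialCommAlg k obj)
    (hNE4 : ∀ w : obj 4, E.d 3 0 w = 0 → E.d 3 1 w = 0 →
      E.d 3 2 w = 0 → E.d 3 3 w = 0 → w = 0)
    (x1 : obj 1) (y3 : obj 3) (hy3 : E.d 2 0 y3 = 0 ∧ E.d 2 1 y3 = 0 ∧ E.d 2 2 y3 = 0) :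
    (E.s 2 2 (E.s 1 1 (E.s 0 0 (E.d 0 1 x1))) - E.s 2 1 (E.s 1 0 x1)) * y3 = 0 := by
  obtain ⟨hy0, hy1, hy2⟩ := hy3
  refine E.mul_eq_zero_of_moore_eq_zero (m := 2)
    (fun w hw => hNE4 w (hw 0 (by norm_num)) (hw 1 (by norm_num)) (hw 2 (by norm_num))
      (hw 3 le_rfl)) ?_ fun i hi => ?_
  · rw [map_sub, E.d_succ_s_apply (n := 2) le_rfl, E.d_last_s_apply (m := 1) (by norm_num),
      E.d_last_s_apply (m := 0) le_rfl, sub_self]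
  · interval_cases i <;> assumption

theorem stmt_5 {k : Type*} [CommRing k] {obj : ℕ → Type*}
    [∀ n, CommRing (obj n)] [∀ n, Algebra k (obj n)]
    (E : SimplicialCommAlg k obj)
    (hNE4 : ∀ w : obj 4, E.d 3 0 w = 0 → E.d 3 1 w = 0 →
      E.d 3 2 w = 0 → E.d 3 3 w = 0 → w = 0)
    (x1 : obj 1) (hx1 : E.d 0 0 x1 = 0) (y3 : obj 3) (hy3 : E.d 2 0 y3 = 0 ∧ E.d 2 1 y3 = 0 ∧ E.d 2 2 y3 = 0) :
    (E.s 2 2 (E.s 1 1 (E.s 0 0 (E.d 0 1 x1))) - E.s 2 1 (E.s 1 0 x1)) * y3 = 0 :=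
  stmt_5_general E hNE4 x1 y3 hy3
end

section
/- Let E be a simplicial commutative k-algebra whose Moore complex satisfies NE_4 = 0. Then for all x_1 ∈ NE_1 and y_3 ∈ NE_3 the following identity holds in E_3: (s_2 s_0 x_1 − s_2 s_1 x_1) · (s_1 d_3 y_3 − s_2 d_3 y_3 + y_3) = 0. -/
/-!
In `E₄`, the element `u = s₃ s₂ (s₀ x - s₁ x)` is killed by `d₁`, while
`v = s₁ y - s₂ y + s₃ y` is killed by `d₀`, `d₂`, `d₃` because `y ∈ NE₃`.
Since faces are ring homomorphisms, `u * v` lies in `NE₄ = 0`, and its last face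
`d₄ (u * v)` is the left-hand side of the identity.
-/

namespace SimplicialCommAlg

variable {k : Type*} [CommRing k] {obj : ℕ → Type*} [∀ n, CommRing (obj n)]
  [∀ n, Algebra k (obj n)] (E : SimplicialCommAlg k obj)

theorem d_s_of_lt (m : ℕ) {i j : ℕ} (hij : i < j) (hj : j ≤ m + 1) (a : obj (m + 1)) :
    E.d (m + 1) i (E.s (m + 1) j a) = E.s m (j - 1) (E.d m i a) :=
  AlgHom.congr_fun (E.ds_lt m i j hij hj) a

theorem d_s_self {n j : ℕ} (hj : j ≤ n) (a : obj n) : E.d n j (E.s n j a) = a :=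
  AlgHom.congr_fun (E.ds_self n j hj) a

theorem d_succ_s {n j : ℕ} (hj : j ≤ n) (a : obj n) : E.d n (j + 1) (E.s n j a) = a :=
  AlgHom.congr_fun (E.ds_succ n j hj) a

theorem d_s_of_gt (m : ℕ) {i j : ℕ} (hij : j + 1 < i) (hi : i ≤ m + 2) (a : obj (m + 1)) :
    E.d (m + 1) i (E.s (m + 1) j a) = E.s m j (E.d m (i - 1) a) :=
  AlgHom.congr_fun (E.ds_gt m i j hij hi) a

theorem d_succ_s_sub_s_succ {n i : ℕ} (hi : i + 1 ≤ n) (x : obj n) :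
    E.d n (i + 1) (E.s n i x - E.s n (i + 1) x) = 0 := by
  rw [map_sub, E.d_succ_s (by omega), E.d_s_self hi, sub_self]

theorem d_one_s_three_s_two (z : obj 2) :
    E.d 3 1 (E.s 3 3 (E.s 2 2 z)) = E.s 2 2 (E.s 1 1 (E.d 1 1 z)) := by
  rw [E.d_s_of_lt 2 (by norm_num) (by norm_num), E.d_s_of_lt 1 (by norm_num) (by norm_num)]

def altDegeneracy (y : obj 3) : obj 4 := E.s 3 1 y - E.s 3 2 y + E.s 3 3 y

variable {E}

theorem d_zero_altDegeneracy {y : obj 3} (hy : E.d 2 0 y = 0) :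
    E.d 3 0 (E.altDegeneracy y) = 0 := by
  rw [altDegeneracy, map_add, map_sub, E.d_s_of_lt 2 (j := 1) (by norm_num) (by norm_num),
    E.d_s_of_lt 2 (j := 2) (by norm_num) (by norm_num),
    E.d_s_of_lt 2 (j := 3) (by norm_num) (by norm_num), hy]
  simp

theorem d_two_altDegeneracy {y : obj 3} (hy : E.d 2 2 y = 0) :
    E.d 3 2 (E.altDegeneracy y) = 0 := by
  rw [altDegeneracy, map_add, map_sub, E.d_succ_s (n := 3) (j := 1) (by norm_num),
    E.d_s_self (n := 3) (j := 2) (by norm_num), E.d_s_of_lt 2 (by norm_num) (by norm_num), hy,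
    map_zero, sub_self, zero_add]

theorem d_three_altDegeneracy {y : obj 3} (hy : E.d 2 2 y = 0) :
    E.d 3 3 (E.altDegeneracy y) = 0 := by
  rw [altDegeneracy, map_add, map_sub, E.d_s_of_gt 2 (by norm_num) (by norm_num),
    E.d_succ_s (n := 3) (j := 2) (by norm_num), E.d_s_self (n := 3) (j := 3) (by norm_num)]
  simp [hy]

theorem d_four_altDegeneracy (y : obj 3) :
    E.d 3 4 (E.altDegeneracy y) = E.s 2 1 (E.d 2 3 y) - E.s 2 2 (E.d 2 3 y) + y := by
  rw [altDegeneracy, map_add, map_sub, E.d_s_of_gt 2 (i := 4) (j := 1) (by norm_num) (by norm_num),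
    E.d_s_of_gt 2 (i := 4) (j := 2) (by norm_num) (by norm_num),
    E.d_succ_s (n := 3) (j := 3) (by norm_num)]

end SimplicialCommAlg

open SimplicialCommAlg in
theorem stmt_7_general {k : Type*} [CommRing k] {obj : ℕ → Type*}
    [∀ n, CommRing (obj n)] [∀ n, Algebra k (obj n)]
    (E : SimplicialCommAlg k obj)
    (hNE4 : ∀ w : obj 4, E.d 3 0 w = 0 → E.d 3 1 w = 0 →
      E.d 3 2 w = 0 → E.d 3 3 w = 0 → w = 0)
    (x1 : obj 1) (y3 : obj 3) (hy3 : E.d 2 0 y3 = 0 ∧ E.d 2 1 y3 = 0 ∧ E.d 2 2 y3 = 0) :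
    (E.s 2 2 (E.s 1 0 x1) - E.s 2 2 (E.s 1 1 x1)) *
      (E.s 2 1 (E.d 2 3 y3) - E.s 2 2 (E.d 2 3 y3) + y3) = 0 := by
  obtain ⟨hy0, -, hy2⟩ := hy3
  set u : obj 4 := E.s 3 3 (E.s 2 2 (E.s 1 0 x1 - E.s 1 1 x1))
  have hu : E.d 3 1 u = 0 := by
    rw [E.d_one_s_three_s_two, E.d_succ_s_sub_s_succ (i := 0) le_rfl, map_zero, map_zero]
  have hw : u * E.altDegeneracy y3 = 0 := by
    refine hNE4 _ ?_ ?_ ?_ ?_ <;> rw [map_mul]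
    · rw [d_zero_altDegeneracy hy0, mul_zero]
    · rw [hu, zero_mul]
    · rw [d_two_altDegeneracy hy2, mul_zero]
    · rw [d_three_altDegeneracy hy2, mul_zero]
  calc _ = E.d 3 4 (u * E.altDegeneracy y3) := by
        rw [map_mul, d_four_altDegeneracy, E.d_succ_s (n := 3) (j := 3) le_rfl, map_sub]
    _ = 0 := by rw [hw, map_zero]

theorem stmt_7 {k : Type*} [CommRing k] {obj : ℕ → Type*}
    [∀ n, CommRing (obj n)] [∀ n, Algebra k (obj n)]
    (E : SimplicialCommAlg k obj)
    (hNE4 : ∀ w : obj 4, E.d 3 0 w = 0 → E.d 3 1 w = 0 →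
      E.d 3 2 w = 0 → E.d 3 3 w = 0 → w = 0)
    (x1 : obj 1) (hx1 : E.d 0 0 x1 = 0) (y3 : obj 3) (hy3 : E.d 2 0 y3 = 0 ∧ E.d 2 1 y3 = 0 ∧ E.d 2 2 y3 = 0) :
    (E.s 2 2 (E.s 1 0 x1) - E.s 2 2 (E.s 1 1 x1)) *
      (E.s 2 1 (E.d 2 3 y3) - E.s 2 2 (E.d 2 3 y3) + y3) = 0 :=
  stmt_7_general E hNE4 x1 y3 hy3
end
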